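/- Let f : ℝ → ℝ be continuous, odd, and strictly increasing on [-π, π], and let η : [0, T] → ℝⁿ be a C¹ solution of η̇_i = f(η_{i+1}) - 2f(η_i) + f(η_{i-1}) (cyclic indices) with η(0) ∈ (-π, π)ⁿ. Suppose t₀ ∈ (0, T] is a first time at which max_i |η_i(t₀)| = π and that not all η_i(t₀) are equal to π and not all equal to -π. Then a contradiction follows; i.e., such an exit is impossible unless the trajectory reaches the all-π (or all-(-π)) configuration. -/

import Mathlib

/-!
At a first time `t₀` at which a coordinate `η i` reaches the upper bound `π`, that coordinate
has a maximum from the left, so its derivative is `≥ 0`; since `f` is increasing, the right-hand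
side `f (η (i + 1)) - 2 f π + f (η (i - 1))` is `≤ 0`, with equality only if both neighbours
also equal `π`. Walking around the cycle, every coordinate equals `π`. The lower bound `-π` is
the same statement for `-η`, which solves the equation for the nonlinearity `y ↦ -f (-y)`.
-/

open Real Filter Topology

theorem HasDerivAt.nonneg_of_eventually_le_left {g : ℝ → ℝ} {d t₀ : ℝ}
    (h : HasDerivAt g d t₀) (hle : ∀ᶠ t in 𝓝[<] t₀, g t ≤ g t₀) : 0 ≤ d := by
  have hslope : Tendsto (slope g t₀) (𝓝[<] t₀) (𝓝 d) :=
    h.tendsto_slope.mono_left (nhdsWithin_mono _ fun _ ht => ne_of_lt ht)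
  refine ge_of_tendsto hslope ?_
  filter_upwards [hle, self_mem_nhdsWithin] with t hgt (ht : t < t₀)
  rw [slope_def_field]
  exact div_nonneg_of_nonpos (sub_nonpos.mpr hgt) (sub_nonpos.mpr ht.le)

theorem StrictMonoOn.eq_of_second_difference_nonneg {f : ℝ → ℝ} {s : Set ℝ}
    (hf : StrictMonoOn f s) {a b c : ℝ} (ha : a ∈ s) (hb : b ∈ s) (hc : c ∈ s)
    (hac : a ≤ c) (hbc : b ≤ c) (h : 0 ≤ f a - 2 * f c + f b) : a = c := by
  have hfa : f a ≤ f c := hf.monotoneOn ha hc hac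
  have hfb : f b ≤ f c := hf.monotoneOn hb hc hbc
  exact hf.injOn ha hc (by linarith)

theorem StrictMonoOn.neg_comp_neg {f : ℝ → ℝ} {s : Set ℝ} (hf : StrictMonoOn f s) :
    StrictMonoOn (fun y => -f (-y)) (-s) := fun _ hx _ hy hxy =>
  neg_lt_neg (hf hy hx (neg_lt_neg hxy))

open Fin.NatCast in
theorem Fin.cycle_induction {n : ℕ} [NeZero n] {p : Fin n → Prop} {i₀ : Fin n} (h₀ : p i₀)
    (hstep : ∀ i, p i → p (i + 1)) (j : Fin n) : p j := by
  have hiter : ∀ k : ℕ, p (i₀ + k) := by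
    intro k
    induction k with
    | zero => simpa using h₀
    | succ k ih => simpa [add_assoc] using hstep _ ih
  simpa using hiter (j - i₀).val

section CyclicLaplacian

variable {n : ℕ} [NeZero n]

def cyclicLaplacian (f : ℝ → ℝ) (x : Fin n → ℝ) (i : Fin n) : ℝ :=
  f (x (i + 1)) - 2 * f (x i) + f (x (i - 1))

theorem cyclicLaplacian_neg (f : ℝ → ℝ) (x : Fin n → ℝ) (i : Fin n) :
    cyclicLaplacian (fun y => -f (-y)) (-x) i = -cyclicLaplacian f x i := by
  simp only [cyclicLaplacian, Pi.neg_apply, neg_neg]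
  ring

variable {f : ℝ → ℝ} {s : Set ℝ} {η : ℝ → Fin n → ℝ} {t₀ c : ℝ}

theorem forall_eq_of_touch_upper_bound (hf : StrictMonoOn f s) (hc : c ∈ s)
    (hflow : ∀ i, HasDerivAt (fun t => η t i) (cyclicLaplacian f (η t₀) i) t₀)
    (hmem : ∀ i, η t₀ i ∈ s) (hle : ∀ i, η t₀ i ≤ c)
    (hbefore : ∀ᶠ t in 𝓝[<] t₀, ∀ i, η t i ≤ c) {i₀ : Fin n} (hi₀ : η t₀ i₀ = c) :
    ∀ i, η t₀ i = c := by
  refine Fin.cycle_induction hi₀ fun i hi => ?_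
  have hderiv : 0 ≤ cyclicLaplacian f (η t₀) i :=
    (hflow i).nonneg_of_eventually_le_left (hbefore.mono fun t ht => hi ▸ ht i)
  rw [cyclicLaplacian, hi] at hderiv
  exact hf.eq_of_second_difference_nonneg (hmem _) (hmem _) hc (hle _) (hle _) hderiv

theorem forall_eq_of_touch_lower_bound (hf : StrictMonoOn f s) (hc : c ∈ s)
    (hflow : ∀ i, HasDerivAt (fun t => η t i) (cyclicLaplacian f (η t₀) i) t₀)
    (hmem : ∀ i, η t₀ i ∈ s) (hge : ∀ i, c ≤ η t₀ i)
    (hbefore : ∀ᶠ t in 𝓝[<] t₀, ∀ i, c ≤ η t i) {i₀ : Fin n} (hi₀ : η t₀ i₀ = c) :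
    ∀ i, η t₀ i = c := by
  have hflow' : ∀ i, HasDerivAt (fun t => (-η t) i)
      (cyclicLaplacian (fun y => -f (-y)) (-η t₀) i) t₀ := fun i => by
    rw [cyclicLaplacian_neg]
    exact (hflow i).neg
  have key := forall_eq_of_touch_upper_bound hf.neg_comp_neg (Set.neg_mem_neg.mpr hc)
    hflow'
    (fun i => Set.neg_mem_neg.mpr (hmem i)) (fun i => neg_le_neg (hge i))
    (hbefore.mono fun t ht i => neg_le_neg (ht i)) (i₀ := i₀) (by simp [hi₀])
  exact fun i => neg_inj.mp (key i)

end CyclicLaplacian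

theorem no_boundary_exit_general
    (n : ℕ) [NeZero n] (f : ℝ → ℝ)
    (hmono : StrictMonoOn f (Set.Icc (-π) π))
    (T : ℝ)
    (η : ℝ → Fin n → ℝ)
    (hflow : ∀ t ∈ Set.Icc (0 : ℝ) T, ∀ i : Fin n,
      HasDerivAt (fun s => η s i)
        (f (η t (i + 1)) - 2 * f (η t i) + f (η t (i - 1))) t)
    (t₀ : ℝ) (ht₀ : t₀ ∈ Set.Ioc 0 T)
    (hbefore : ∀ t ∈ Set.Ico (0 : ℝ) t₀, ∀ i : Fin n, |η t i| < π)
    (hle : ∀ i : Fin n, |η t₀ i| ≤ π)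
    (hhit : ∃ i : Fin n, |η t₀ i| = π)
    (hnotallp : ¬ ∀ i : Fin n, η t₀ i = π)
    (hnotallm : ¬ ∀ i : Fin n, η t₀ i = -π) :
    False := by
  obtain ⟨i₀, hi₀⟩ := hhit
  have hflow₀ := hflow t₀ ⟨ht₀.1.le, ht₀.2⟩
  have hmem : ∀ i, η t₀ i ∈ Set.Icc (-π) π := fun i => abs_le.mp (hle i)
  have hbefore' : ∀ᶠ t in 𝓝[<] t₀, ∀ i, η t i ∈ Set.Icc (-π) π :=
    eventually_of_mem (Ioo_mem_nhdsLT ht₀.1) fun t ht i =>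
      Set.Ioo_subset_Icc_self (abs_lt.mp (hbefore t ⟨ht.1.le, ht.2⟩ i))
  have hπ : -π ≤ π := by linarith [pi_pos]
  rcases (abs_eq pi_pos.le).mp hi₀ with hp | hm
  · exact hnotallp <| forall_eq_of_touch_upper_bound hmono (Set.right_mem_Icc.mpr hπ)
      hflow₀ hmem (fun i => (hmem i).2) (hbefore'.mono fun t ht i => (ht i).2) hp
  · exact hnotallm <| forall_eq_of_touch_lower_bound hmono (Set.left_mem_Icc.mpr hπ)
      hflow₀ hmem (fun i => (hmem i).1) (hbefore'.mono fun t ht i => (ht i).1) hm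

theorem no_boundary_exit
    (n : ℕ) [NeZero n] (hn : 2 ≤ n) (f : ℝ → ℝ)
    (hcont : Continuous f)
    (hodd : ∀ x, f (-x) = -f x)
    (hmono : StrictMonoOn f (Set.Icc (-π) π))
    (T : ℝ) (hT : 0 < T)
    (η : ℝ → Fin n → ℝ)
    (hC1 : ∀ i : Fin n, ContDiffOn ℝ 1 (fun t => η t i) (Set.Icc 0 T))
    (hflow : ∀ t ∈ Set.Icc (0 : ℝ) T, ∀ i : Fin n,
      HasDerivAt (fun s => η s i)
        (f (η t (i + 1)) - 2 * f (η t i) + f (η t (i - 1))) t)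
    (hinit : ∀ i : Fin n, η 0 i ∈ Set.Ioo (-π) π)
    (t₀ : ℝ) (ht₀ : t₀ ∈ Set.Ioc 0 T)
    (hbefore : ∀ t ∈ Set.Ico (0 : ℝ) t₀, ∀ i : Fin n, |η t i| < π)
    (hle : ∀ i : Fin n, |η t₀ i| ≤ π)
    (hhit : ∃ i : Fin n, |η t₀ i| = π)
    (hnotallp : ¬ ∀ i : Fin n, η t₀ i = π)
    (hnotallm : ¬ ∀ i : Fin n, η t₀ i = -π) :
    False :=
  no_boundary_exit_general n f hmono T η hflow t₀ ht₀ hbefore hle hhit hnotallp hnotallm
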